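/- arXiv:2411.12857 — 5 statements merged into one kernel-verified Lean document; each statement's English description precedes it below -/
import Mathlib

section
/- Well-definedness of the conjunction projection: let A and B be abstractions. If h = h₁ + h₂ = h₁' + h₂' with h₁ ⊥ h₂, h₁' ⊥ h₂', h₁, h₁' ∈ purv(A), and h₂, h₂' ∈ purv(B), then π_A(h₁) = π_A(h₁') and π_B(h₂) = π_B(h₂'). Hence the projection of A * B maps every heap to a unique value in (X_A × X_B) + {✗}. -/
namespace HC

open Classical

universe u v w

/-- A heap: a finite partial map from addresses `L` to values `V`. -/
structure Heap (L : Type u) (V : Type v) where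
  toFun : L → Option V
  fin : {l | toFun l ≠ none}.Finite

variable {L : Type u} {V : Type v}

/-- Domain of a heap. -/
def Heap.dom (h : Heap L V) : Set L := {l | h.toFun l ≠ none}

/-- Disjointness of heaps. -/
def HDisj (h₁ h₂ : Heap L V) : Prop := Disjoint h₁.dom h₂.dom

/-- Union of heaps (left-biased; used on disjoint heaps). -/
def hunion (h₁ h₂ : Heap L V) : Heap L V where
  toFun l := (h₁.toFun l).elim (h₂.toFun l) some
  fin := by
    apply (h₁.fin.union h₂.fin).subset
    intro l hl
    simp only [Set.mem_setOf_eq] at hl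
    rcases hh : h₁.toFun l with _ | v
    · right; simpa [Heap.dom, hh, Option.elim] using hl
    · left; simp [Heap.dom, hh]

/-- `subheap h₁ h₂`: `h₁` is a subheap of `h₂`. -/
def subheap (h₁ h₂ : Heap L V) : Prop := ∃ k, HDisj h₁ k ∧ hunion h₁ k = h₂

/-- `hsub k h'` : the subheap of `k` with domain `dom k \ dom h'`. -/
def hsub (k h' : Heap L V) : Heap L V where
  toFun l := (h'.toFun l).elim (k.toFun l) (fun _ => none)
  fin := by
    apply k.fin.subset
    intro l hl
    simp only [Set.mem_setOf_eq] at hl ⊢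
    rcases hh : h'.toFun l with _ | v
    · simpa [hh, Option.elim] using hl
    · simp [hh, Option.elim] at hl

/-- Extension `Ψ⁺` of a heap predicate: some subheap satisfies `Ψ`. -/
def extPred (Ψ : Heap L V → Prop) (h : Heap L V) : Prop := ∃ h', subheap h' h ∧ Ψ h'

/-! ### Concrete programs -/

/-- Sufficient heaps of a program. -/
def suff (f : Heap L V → Set (Heap L V)) : Set (Heap L V) := {h | f h ≠ ∅}

/-- Footprint of a program. -/
def foot (f : Heap L V → Set (Heap L V)) : Set (Heap L V) :=
  suff f ∪ {h | ∀ h', HDisj h h' → hunion h h' ∉ suff f}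

/-- Local action: a concrete program is a total function `f : H → 𝒫(H)` acting locally. -/
def LocalAction (f : Heap L V → Set (Heap L V)) : Prop :=
  ∀ h, f h ≠ ∅ → ∀ h', HDisj h h' →
    f (hunion h h') ≠ ∅ ∧ ∀ k ∈ f (hunion h h'), subheap h' k

/-- The concrete transformer `f̄`. -/
noncomputable def tbar (f : Heap L V → Set (Heap L V)) (C : Set (Heap L V)) :
    Set (Heap L V) :=
  if C ⊆ suff f then ⋃ h ∈ C, f h else ∅

/-- Sequencing `f;g ≜ ḡ ∘ f`. -/
noncomputable def pseq (f g : Heap L V → Set (Heap L V)) : Heap L V → Set (Heap L V) :=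
  fun h => tbar g (f h)

/-! ### Abstractions and the abstract domain -/

/-- An abstraction is given by its projection `π : H → X + {✗}`, encoded with `Option`
(`none` is `✗`). -/
def Locality (π : Heap L V → Option X) : Prop :=
  ∀ h h', HDisj h h' → (π h).isSome → π (hunion h h') = π h

/-- The purview of an abstraction. -/
def purv (π : Heap L V → Option X) : Set (Heap L V) := {h | (π h).isSome}

/-- The abstract domain `𝒜 = X + {⊥, ✗, ✓, ⊤}`. -/
inductive AbsDom (X : Type w) where
  | bot | cross | check | top
  | val (x : X)

/-- The partial order on the abstract domain. -/
def ale {X : Type w} : AbsDom X → AbsDom X → Prop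
  | .bot, _ => True
  | _, .top => True
  | .cross, .cross => True
  | .check, .check => True
  | .val _, .check => True
  | .val x, .val y => x = y
  | _, _ => False

/-- The projection of a single heap, viewed in the abstract domain. -/
def liftProj (π : Heap L V → Option X) (h : Heap L V) : AbsDom X :=
  (π h).elim .cross .val

/-- Abstraction function `α(C) = ⨆_{h ∈ C} π(h)` (the join computed explicitly). -/
noncomputable def alpha (π : Heap L V → Option X) (C : Set (Heap L V)) : AbsDom X :=
  if C = ∅ then .bot
  else if hx : ∃ x, ∀ h ∈ C, π h = some x then .val hx.choose
  else if ∀ h ∈ C, (π h).isSome then .check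
  else if ∀ h ∈ C, π h = none then .cross
  else .top

/-- Concretization function `γ(x) = {h | π(h) ≤ x}`. -/
def gamma (π : Heap L V → Option X) (x : AbsDom X) : Set (Heap L V) :=
  {h | ale (liftProj π h) x}

/-! ### Observational equivalence and concrete commutativity -/

/-- `[Ψ, ∼]` is an observational equivalence: `∼` is an equivalence relation on `H(Ψ⁺)`. -/
def IsObsEq (Ψ : Heap L V → Prop) (sim : Heap L V → Heap L V → Prop) : Prop :=
  (∀ h, extPred Ψ h → sim h h) ∧
  (∀ h h', extPred Ψ h → extPred Ψ h' → sim h h' → sim h' h) ∧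
  (∀ a b c, extPred Ψ a → extPred Ψ b → extPred Ψ c → sim a b → sim b c → sim a c)

/-- Concrete commutativity of `f` and `g` under precondition `P` w.r.t. `[Ψ, ∼]`. -/
def CommuteUnder (Ψ : Heap L V → Prop) (sim : Heap L V → Heap L V → Prop)
    (f g : Heap L V → Set (Heap L V)) (P : Heap L V → Prop) : Prop :=
  ∀ h, P h → pseq f g h ≠ ∅ ∧ pseq g f h ≠ ∅ ∧
    ∃ h', extPred Ψ h' ∧
      ∀ k, (k ∈ pseq f g h ∨ k ∈ pseq g f h) → extPred Ψ k ∧ sim k h'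

/-- The equivalence relation `∼_A` induced by an abstraction. -/
def simInd (π : Heap L V → Option X) (h h' : Heap L V) : Prop := π h = π h'

/-- The heap predicate "h is in purview", used in the induced observational equivalence. -/
def purvPred (π : Heap L V → Option X) (h : Heap L V) : Prop := (π h).isSome

/-- An abstraction captures an observational equivalence. -/
def CapturesEq (π : Heap L V → Option X) (Ψ : Heap L V → Prop)
    (sim : Heap L V → Heap L V → Prop) : Prop :=
  (∀ h, extPred Ψ h → (π h).isSome) ∧
  (∀ h h', Ψ h → Ψ h' → (π h).isSome → π h = π h' → sim h h')

/-! ### Abstract programs and soundness -/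

/-- The abstract transformer `m̂` of an abstract program `m : X → 𝒜`. -/
def mhat {X : Type w} (m : X → AbsDom X) : AbsDom X → AbsDom X
  | .bot => .bot
  | .val x => m x
  | _ => .top

/-- `m` soundly abstracts `f` in the abstraction with projection `π`. -/
def Sound (π : Heap L V → Option X) (m : X → AbsDom X)
    (f : Heap L V → Set (Heap L V)) : Prop :=
  (∀ (C : Set (Heap L V)) (x : AbsDom X),
      ale (alpha π C) x → ale (alpha π (tbar f C)) (mhat m x)) ∧
  (∀ C : Set (Heap L V), (∃ x, alpha π C = .val x) → alpha π (tbar f C) = .bot →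
      mhat m (alpha π C) = .bot)

/-- Abstract programs `m` and `n` commute under `Q`. -/
def AbsCommute {X : Type w} (m n : X → AbsDom X) (Q : X → Prop) : Prop :=
  ∀ x, Q x → mhat n (m x) = mhat m (n x) ∧ ∃ y, mhat n (m x) = .val y

/-- An abstraction captures a concrete program. -/
def CapturesProg (π : Heap L V → Option X) (f : Heap L V → Set (Heap L V)) : Prop :=
  (purv π ⊆ foot f) ∧
  (∀ h ∈ purv π ∩ suff f, ∃ x, alpha π (f h) = .val x) ∧
  (∀ h ∈ purv π ∩ foot f, ∀ h', HDisj h h' →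
      alpha π ((fun k => hsub k h') '' f (hunion h h')) = alpha π (f h))

/-! ### Conjunction of abstractions and of abstract programs -/

/-- Projection of the conjunction `A * B`. -/
noncomputable def conjProj (πA : Heap L V → Option X) (πB : Heap L V → Option Y) :
    Heap L V → Option (X × Y) := fun h =>
  if hc : ∃ p : Heap L V × Heap L V,
      HDisj p.1 p.2 ∧ hunion p.1 p.2 = h ∧ (πA p.1).isSome ∧ (πB p.2).isSome
    then some ((πA hc.choose.1).get hc.choose_spec.2.2.1,
               (πB hc.choose.2).get hc.choose_spec.2.2.2)
    else none

/-- Forget the specific abstract value (used for the join in a compound domain). -/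
def toFour {X : Type w} {Z : Type*} : AbsDom X → AbsDom Z
  | .bot => .bot
  | .cross => .cross
  | .top => .top
  | _ => .check

/-- Join in the abstract domain (on the elements arising in program conjunction). -/
def djoin {Z : Type*} : AbsDom Z → AbsDom Z → AbsDom Z
  | .bot, b => b
  | a, .bot => a
  | .cross, .cross => .cross
  | .check, .check => .check
  | .check, .val _ => .check
  | .val _, .check => .check
  | .val x, .val _ => .val x
  | _, _ => .top

/-- Conjunction `m * n` of abstract programs. -/
def conjProg {X Y : Type*} (m : X → AbsDom X) (n : Y → AbsDom Y) :
    X × Y → AbsDom (X × Y) := fun p =>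
  match m p.1, n p.2 with
  | .bot, _ => .bot
  | _, .bot => .bot
  | .val a, .val b => .val (a, b)
  | ma, nb => djoin (toFour ma) (toFour nb)

/-! ### Isomorphism of abstractions -/

/-- `φ` induces an isomorphism between the abstractions with projections `πA`, `πB`. -/
def Iso (πA : Heap L V → Option X) (πB : Heap L V → Option Y) (φ : X ≃ Y) : Prop :=
  ∀ h, (πA h).map φ = πB h

/-- Extension of `φ : X → Y` to the abstract domains, fixing `⊥, ✗, ✓, ⊤`. -/
def mapAbs {X Y : Type*} (φ : X → Y) : AbsDom X → AbsDom Y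
  | .bot => .bot
  | .cross => .cross
  | .check => .check
  | .top => .top
  | .val x => .val (φ x)

end HC

open HC

theorem Heap.ext' {L V : Type*} {h₁ h₂ : Heap L V} (h : h₁.toFun = h₂.toFun) : h₁ = h₂ := by
  cases h₁; cases h₂; simp_all

theorem hunion_comm {L V : Type*} {h₁ h₂ : Heap L V} (d : HDisj h₁ h₂) :
    hunion h₁ h₂ = hunion h₂ h₁ := by
  apply Heap.ext'
  funext l
  have hd : h₁.toFun l = none ∨ h₂.toFun l = none := by
    by_contra hc
    push_neg at hc
    exact (Set.disjoint_left.mp d hc.1) hc.2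
  simp only [hunion]
  rcases hd with hd | hd <;> rw [hd] <;>
    rcases e2 : h₂.toFun l with _ | w <;> rcases e1 : h₁.toFun l with _ | v <;>
    simp_all [Option.elim]

theorem proj_eq_of_split {L V X : Type*} {πA : Heap L V → Option X}
    (hA : Locality πA) {h h₁ h₂ : Heap L V} (d : HDisj h₁ h₂)
    (e : hunion h₁ h₂ = h) (p₁ : (πA h₁).isSome) : πA h = πA h₁ := by
  rw [← e, hA h₁ h₂ d p₁]

/-- well-definedness of the conjunction projection. -/
theorem conj_well_defined {L V X Y : Type} [Countable L] [Infinite L]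
    (πA : Heap L V → Option X) (πB : Heap L V → Option Y)
    (hA : Locality πA) (hB : Locality πB)
    (h h₁ h₂ h₁' h₂' : Heap L V)
    (d : HDisj h₁ h₂) (d' : HDisj h₁' h₂')
    (e : hunion h₁ h₂ = h) (e' : hunion h₁' h₂' = h)
    (p₁ : (πA h₁).isSome) (p₂ : (πB h₂).isSome)
    (p₁' : (πA h₁').isSome) (p₂' : (πB h₂').isSome) :
    (πA h₁ = πA h₁' ∧ πB h₂ = πB h₂') ∧
    conjProj πA πB h = some ((πA h₁).get p₁, (πB h₂).get p₂) := by
  have key : ∀ (k₁ k₂ : Heap L V), HDisj k₁ k₂ → hunion k₁ k₂ = h →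
      (πA k₁).isSome → (πB k₂).isSome → πA k₁ = πA h₁ ∧ πB k₂ = πB h₂ := by
    intro k₁ k₂ dk ek q₁ q₂
    constructor
    · rw [← proj_eq_of_split hA dk ek q₁, proj_eq_of_split hA d e p₁]
    · rw [← proj_eq_of_split hB dk.symm (by rw [← hunion_comm dk, ek]) q₂,
        proj_eq_of_split hB d.symm (by rw [← hunion_comm d, e]) p₂]
  have main := key h₁' h₂' d' e' p₁' p₂'
  refine ⟨⟨main.1.symm, main.2.symm⟩, ?_⟩
  rw [conjProj]
  have hc : ∃ p : Heap L V × Heap L V,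
      HDisj p.1 p.2 ∧ hunion p.1 p.2 = h ∧ (πA p.1).isSome ∧ (πB p.2).isSome :=
    ⟨(h₁, h₂), d, e, p₁, p₂⟩
  rw [dif_pos hc]
  obtain ⟨dc, ec, q₁, q₂⟩ := hc.choose_spec
  have := key hc.choose.1 hc.choose.2 dc ec q₁ q₂
  congr 1
  rw [Prod.mk.injEq]
  constructor
  · apply Option.some_injective
    rw [Option.some_get, Option.some_get, this.1]
  · apply Option.some_injective
    rw [Option.some_get, Option.some_get, this.2]
end

section
/- Soundness with precise image yields the first two capture conditions: if abstract program m soundly abstracts concrete program f in abstraction A, and the image of m is contained in X_A ∪ {⊥}, then purv(A) ⊆ foot(f) and for every h ∈ purv(A) ∩ suff(f), α_A(f(h)) ∈ X_A. -/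
open HC

lemma alpha_singleton {L V X : Type} (π : Heap L V → Option X) (h : Heap L V) (x : X)
    (hx : π h = some x) : alpha π {h} = AbsDom.val x := by
  have hne : ({h} : Set (Heap L V)) ≠ ∅ := by simp
  have hex : ∃ x', ∀ k ∈ ({h} : Set (Heap L V)), π k = some x' :=
    ⟨x, by intro k hk; rw [Set.mem_singleton_iff] at hk; rw [hk, hx]⟩
  rw [alpha, if_neg hne, dif_pos hex]
  have := hex.choose_spec h rfl
  rw [hx] at this
  exact congrArg AbsDom.val (Option.some_injective _ this).symm

lemma alpha_ne_bot {L V X : Type} (π : Heap L V → Option X) (C : Set (Heap L V))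
    (hC : C ≠ ∅) : alpha π C ≠ AbsDom.bot := by
  rw [alpha, if_neg hC]
  split <;> try split
  all_goals simp_all <;> split <;> simp

lemma ale_bot {X : Type} (a : AbsDom X) (h : ale a AbsDom.bot) : a = AbsDom.bot := by
  cases a <;> simp_all [ale]

lemma ale_val {X : Type} (a : AbsDom X) (y : X) (h : ale a (AbsDom.val y)) :
    a = AbsDom.bot ∨ a = AbsDom.val y := by
  cases a <;> simp_all [ale]

lemma tbar_singleton {L V : Type} (f : Heap L V → Set (Heap L V)) (h : Heap L V)
    (hh : h ∈ suff f) : tbar f {h} = f h := by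
  rw [tbar, if_pos (by simpa using hh)]
  simp

/-- soundness with precise image yields the first two capture conditions. -/
theorem sound_precise_capture {L V X : Type} [Countable L] [Infinite L]
    (π : Heap L V → Option X) (hloc : Locality π)
    (f : Heap L V → Set (Heap L V)) (hf : LocalAction f)
    (m : X → AbsDom X) (hm : Sound π m f)
    (him : ∀ x, m x = AbsDom.bot ∨ ∃ y, m x = AbsDom.val y) :
    purv π ⊆ foot f ∧
    ∀ h ∈ purv π ∩ suff f, ∃ x, alpha π (f h) = AbsDom.val x := by
  constructor
  · intro h hh
    obtain ⟨x, hx⟩ := Option.isSome_iff_exists.mp hh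
    by_cases hs : h ∈ suff f
    · exact Or.inl hs
    · right
      intro h' hd hmem
      -- m x = ⊥ from soundness (2) on {h}
      have hsing : alpha π ({h} : Set (Heap L V)) = AbsDom.val x := alpha_singleton π h x hx
      have htb : tbar f ({h} : Set (Heap L V)) = ∅ := by
        rw [tbar, if_neg]
        intro hsub
        exact hs (hsub rfl)
      have hbot : alpha π (tbar f ({h} : Set (Heap L V))) = AbsDom.bot := by
        rw [htb, alpha, if_pos rfl]
      have hmx : m x = AbsDom.bot := by
        have := hm.2 {h} ⟨x, hsing⟩ hbot
        rwa [hsing] at this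
      -- now contradiction with h + h' ∈ suff f
      have hx' : π (hunion h h') = some x := by
        rw [hloc h h' hd (by simp [hx]), hx]
      have hsing' : alpha π ({hunion h h'} : Set (Heap L V)) = AbsDom.val x :=
        alpha_singleton π _ x hx'
      have hale : ale (alpha π ({hunion h h'} : Set (Heap L V))) (AbsDom.val x) := by
        rw [hsing']; exact rfl
      have := hm.1 {hunion h h'} (AbsDom.val x) hale
      rw [show mhat m (AbsDom.val x) = m x from rfl, hmx] at this
      have hzero := ale_bot _ this
      rw [tbar_singleton f _ hmem] at hzero
      exact alpha_ne_bot π _ hmem hzero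
  · intro h hh
    obtain ⟨hp, hs⟩ := hh
    obtain ⟨x, hx⟩ := Option.isSome_iff_exists.mp hp
    have hsing : alpha π ({h} : Set (Heap L V)) = AbsDom.val x := alpha_singleton π h x hx
    have hale : ale (alpha π ({h} : Set (Heap L V))) (AbsDom.val x) := by
      rw [hsing]; exact rfl
    have h1 := hm.1 {h} (AbsDom.val x) hale
    rw [tbar_singleton f _ hs, show mhat m (AbsDom.val x) = m x from rfl] at h1
    rcases him x with hb | ⟨y, hy⟩
    · rw [hb] at h1
      exact absurd (ale_bot _ h1) (alpha_ne_bot π _ hs)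
    · rw [hy] at h1
      rcases ale_val _ _ h1 with hb | hv
      · exact absurd hb (alpha_ne_bot π _ hs)
      · exact ⟨y, hv⟩
end

section
/- Compound program soundness theorem: if m soundly abstracts f in A with A capturing f, and n soundly abstracts g in B with B capturing g, then m * n soundly abstracts both sequences f;g and g;f in A * B, and A * B captures both f;g and g;f. -/
open HC

namespace CS

variable {L : Type u} {V : Type v} {X Y Z : Type*}

theorem Heap.ext' {h₁ h₂ : Heap L V} (h : ∀ l, h₁.toFun l = h₂.toFun l) : h₁ = h₂ := by
  cases h₁; cases h₂; simp only [Heap.mk.injEq]; funext l; exact h l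

theorem mem_dom {h : Heap L V} {l : L} : l ∈ h.dom ↔ h.toFun l ≠ none := Iff.rfl

theorem hdisj_iff {h₁ h₂ : Heap L V} :
    HDisj h₁ h₂ ↔ ∀ l, h₁.toFun l = none ∨ h₂.toFun l = none := by
  constructor
  · intro hd l
    by_cases h : h₁.toFun l = none
    · exact Or.inl h
    · right
      by_contra h2
      exact Set.disjoint_left.mp hd h h2
  · intro hd
    rw [HDisj, Set.disjoint_left]
    intro l h1 h2
    rcases hd l with h | h
    · exact h1 h
    · exact h2 h

theorem hdisj_symm {h₁ h₂ : Heap L V} (h : HDisj h₁ h₂) : HDisj h₂ h₁ := by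
  rw [hdisj_iff] at *; intro l; exact (h l).symm

theorem hunion_toFun (h₁ h₂ : Heap L V) (l : L) :
    (hunion h₁ h₂).toFun l = (h₁.toFun l).elim (h₂.toFun l) some := rfl

theorem hunion_comm {h₁ h₂ : Heap L V} (hd : HDisj h₁ h₂) :
    hunion h₁ h₂ = hunion h₂ h₁ := by
  apply Heap.ext'
  intro l
  rw [hdisj_iff] at hd
  rcases hd l with h | h <;> simp [hunion_toFun, h] <;>
    rcases h2 : h₂.toFun l with _ | v <;> rcases h1 : h₁.toFun l with _ | w <;>
    simp_all [Option.elim]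

theorem hunion_assoc (a b c : Heap L V) :
    hunion (hunion a b) c = hunion a (hunion b c) := by
  apply Heap.ext'
  intro l
  rcases ha : a.toFun l with _ | v <;> simp [hunion_toFun, ha, Option.elim]

theorem dom_hunion (a b : Heap L V) : (hunion a b).dom = a.dom ∪ b.dom := by
  ext l
  simp only [Heap.dom, hunion_toFun, Set.mem_setOf_eq, Set.mem_union]
  rcases ha : a.toFun l with _ | v <;> simp [Option.elim]

theorem hdisj_hunion_right {a b c : Heap L V} :
    HDisj a (hunion b c) ↔ HDisj a b ∧ HDisj a c := by
  rw [HDisj, HDisj, HDisj, dom_hunion, Set.disjoint_union_right]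

theorem hdisj_hunion_left {a b c : Heap L V} :
    HDisj (hunion a b) c ↔ HDisj a c ∧ HDisj b c := by
  rw [HDisj, HDisj, HDisj, dom_hunion, Set.disjoint_union_left]

theorem sub_decomp {a j k : Heap L V} (hd : HDisj a j) (hu : hunion a j = k) :
    hsub k a = j := by
  subst hu
  apply Heap.ext'
  intro l
  rw [hdisj_iff] at hd
  rcases ha : a.toFun l with _ | v
  · simp [hsub, hunion_toFun, ha, Option.elim]
  · rcases hd l with h | h
    · simp [ha] at h
    · simp [hsub, hunion_toFun, ha, Option.elim, h]

/-- The empty heap. -/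
def hemp : Heap L V := ⟨fun _ => none, by simp⟩

theorem hunion_hemp (h : Heap L V) : hunion h hemp = h := by
  apply Heap.ext'
  intro l
  rcases hh : h.toFun l with _ | v <;> simp [hunion_toFun, hemp, hh, Option.elim]

theorem hdisj_hemp (h : Heap L V) : HDisj h hemp := by
  rw [hdisj_iff]; intro l; right; rfl

theorem hsub_hemp (k : Heap L V) : hsub k hemp = k := by
  apply Heap.ext'; intro l; simp [hsub, hemp, Option.elim]

/-! ### alpha / ale / tbar lemmas -/

theorem alpha_empty (π : Heap L V → Option X) : alpha π (∅ : Set (Heap L V)) = .bot := by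
  simp [alpha]

theorem alpha_const {π : Heap L V → Option X} {C : Set (Heap L V)} {x : X}
    (hne : C.Nonempty) (hall : ∀ h ∈ C, π h = some x) : alpha π C = .val x := by
  have hC : C ≠ ∅ := hne.ne_empty
  have hx : ∃ y, ∀ h ∈ C, π h = some y := ⟨x, hall⟩
  rw [alpha, if_neg hC, dif_pos hx]
  obtain ⟨h₀, hh₀⟩ := hne
  have := hx.choose_spec h₀ hh₀
  rw [hall h₀ hh₀] at this
  simp only [Option.some.injEq] at this
  rw [this]

theorem alpha_eq_bot_iff {π : Heap L V → Option X} {C : Set (Heap L V)} :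
    alpha π C = .bot ↔ C = ∅ := by
  constructor
  · intro h
    by_contra hC
    rw [alpha, if_neg hC] at h
    split_ifs at h <;> simp_all
  · intro h; subst h; exact alpha_empty π

theorem alpha_eq_val {π : Heap L V → Option X} {C : Set (Heap L V)} {x : X}
    (h : alpha π C = .val x) : C ≠ ∅ ∧ ∀ k ∈ C, π k = some x := by
  by_cases hC : C = ∅
  · rw [hC, alpha_empty] at h; simp at h
  refine ⟨hC, ?_⟩
  rw [alpha, if_neg hC] at h
  by_cases hx : ∃ y, ∀ k ∈ C, π k = some y
  · rw [dif_pos hx] at h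
    simp only [AbsDom.val.injEq] at h
    rw [← h]; exact hx.choose_spec
  · rw [dif_neg hx] at h
    split_ifs at h <;> simp_all

theorem alpha_cases_of_some {π : Heap L V → Option X} {C : Set (Heap L V)}
    (hall : ∀ h ∈ C, (π h).isSome) :
    alpha π C = .bot ∨ alpha π C = .check ∨ ∃ x, alpha π C = .val x := by
  by_cases hC : C = ∅
  · left; rw [hC]; exact alpha_empty π
  rw [alpha, if_neg hC]
  by_cases hx : ∃ y, ∀ k ∈ C, π k = some y
  · right; right; rw [dif_pos hx]; exact ⟨_, rfl⟩
  · right; left; rw [dif_neg hx, if_pos hall]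

theorem ale_val_right {z : AbsDom X} {x : X} :
    ale z (.val x) ↔ z = .bot ∨ z = .val x := by
  cases z <;> simp [ale] <;> rintro rfl <;> rfl

theorem ale_bot_left (z : AbsDom X) : ale .bot z := by simp [ale]

theorem tbar_of_subset {f : Heap L V → Set (Heap L V)} {C : Set (Heap L V)}
    (h : C ⊆ suff f) : tbar f C = ⋃ h ∈ C, f h := if_pos h

theorem tbar_of_not_subset {f : Heap L V → Set (Heap L V)} {C : Set (Heap L V)}
    (h : ¬ C ⊆ suff f) : tbar f C = ∅ := if_neg h

theorem tbar_empty (f : Heap L V → Set (Heap L V)) : tbar f ∅ = ∅ := by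
  rw [tbar_of_subset (Set.empty_subset _)]; simp

theorem tbar_singleton_mem {f : Heap L V → Set (Heap L V)} {h : Heap L V}
    (hs : h ∈ suff f) : tbar f {h} = f h := by
  rw [tbar_of_subset (by simpa using hs)]; simp

theorem tbar_singleton_not_mem {f : Heap L V → Set (Heap L V)} {h : Heap L V}
    (hs : h ∉ suff f) : tbar f {h} = ∅ := by
  apply tbar_of_not_subset
  intro hsub
  exact hs (hsub rfl)

theorem not_suff_iff {f : Heap L V → Set (Heap L V)} {h : Heap L V} :
    h ∉ suff f ↔ f h = ∅ := by simp [suff]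

/-! ### derived facts about Sound / CapturesProg -/

theorem mem_purv {π : Heap L V → Option X} {h : Heap L V} {a : X}
    (ha : π h = some a) : h ∈ purv π := by
  show (π h).isSome; rw [ha]; rfl

theorem sound_val {π : Heap L V → Option X} {m : X → AbsDom X}
    {f : Heap L V → Set (Heap L V)} (hm : Sound π m f) {h : Heap L V} {a a' : X}
    (hπ : π h = some a) (hs : h ∈ suff f) (hval : alpha π (f h) = .val a') :
    ale (.val a' : AbsDom X) (m a) := by
  have h1 := hm.1 {h} (.val a)
    (by rw [alpha_const (C := {h}) (x := a) (Set.singleton_nonempty h) (by simp [hπ])]; simp [ale])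
  rwa [tbar_singleton_mem hs, hval] at h1

theorem sound_bot {π : Heap L V → Option X} {m : X → AbsDom X}
    {f : Heap L V → Set (Heap L V)} (hm : Sound π m f) {h : Heap L V} {a : X}
    (hπ : π h = some a) (hs : h ∉ suff f) : m a = .bot := by
  have h2 := hm.2 {h} ⟨a, alpha_const (C := {h}) (x := a) (Set.singleton_nonempty h) (by simp [hπ])⟩
    (by rw [tbar_singleton_not_mem hs, alpha_empty])
  rwa [alpha_const (C := {h}) (x := a) (Set.singleton_nonempty h) (by simp [hπ])] at h2

theorem capture_never {π : Heap L V → Option X} {f : Heap L V → Set (Heap L V)}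
    (hcf : CapturesProg π f) {h : Heap L V} {a : X} (hπ : π h = some a)
    (hs : h ∉ suff f) : ∀ h', HDisj h h' → f (hunion h h') = ∅ := by
  intro h' hd
  have hfoot : h ∈ foot f := hcf.1 (mem_purv hπ)
  rcases hfoot with hfoot | hfoot
  · exact absurd hfoot hs
  · exact not_suff_iff.mp (hfoot h' hd)

theorem capture_frame {π : Heap L V → Option X} {f : Heap L V → Set (Heap L V)}
    (hcf : CapturesProg π f) {h : Heap L V} {a a' : X} (hπ : π h = some a)
    (hs : h ∈ suff f) (hval : alpha π (f h) = .val a') {h' : Heap L V}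
    (hd : HDisj h h') : ∀ k ∈ f (hunion h h'), π (hsub k h') = some a' := by
  intro k hk
  have h3 := hcf.2.2 h ⟨mem_purv hπ, Or.inl hs⟩ h' hd
  rw [hval] at h3
  exact (alpha_eq_val h3).2 _ ⟨k, hk, rfl⟩

/-! ### the conjunction projection -/

theorem conjProj_eq_some {πA : Heap L V → Option X} {πB : Heap L V → Option Y}
    (hA : Locality πA) (hB : Locality πB) {h h₁ h₂ : Heap L V} {a : X} {b : Y}
    (hd : HDisj h₁ h₂) (hu : hunion h₁ h₂ = h) (ha : πA h₁ = some a)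
    (hb : πB h₂ = some b) : conjProj πA πB h = some (a, b) := by
  have hc : ∃ p : Heap L V × Heap L V,
      HDisj p.1 p.2 ∧ hunion p.1 p.2 = h ∧ (πA p.1).isSome ∧ (πB p.2).isSome :=
    ⟨(h₁, h₂), hd, hu, by simp [ha], by simp [hb]⟩
  rw [conjProj, dif_pos hc]
  obtain ⟨hd', hu', hsa, hsb⟩ := hc.choose_spec
  have e1 : πA h = πA hc.choose.1 := by
    rw [← hA _ _ hd' hsa, hu']
  have e2 : πA h = some a := by
    rw [← hu, hA _ _ hd (by simp [ha]), ha]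
  have e3 : πB h = πB hc.choose.2 := by
    rw [← hB _ _ (hdisj_symm hd') hsb, ← hunion_comm hd', hu']
  have e4 : πB h = some b := by
    rw [← hu, hunion_comm hd, hB _ _ (hdisj_symm hd) (by simp [hb]), hb]
  have ea : πA hc.choose.1 = some a := e1.symm.trans e2
  have eb : πB hc.choose.2 = some b := e3.symm.trans e4
  simp only [Option.some.injEq, Prod.mk.injEq]
  constructor
  · exact Option.some_injective _ ((Option.some_get hsa).trans ea)
  · exact Option.some_injective _ ((Option.some_get hsb).trans eb)

theorem conjProj_some_iff {πA : Heap L V → Option X} {πB : Heap L V → Option Y}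
    (hA : Locality πA) (hB : Locality πB) {h : Heap L V} {a : X} {b : Y} :
    conjProj πA πB h = some (a, b) ↔
      ∃ h₁ h₂, HDisj h₁ h₂ ∧ hunion h₁ h₂ = h ∧ πA h₁ = some a ∧ πB h₂ = some b := by
  constructor
  · intro hp
    rw [conjProj] at hp
    split_ifs at hp with hc
    · simp only [Option.some.injEq, Prod.mk.injEq] at hp
      obtain ⟨hd', hu', hsa, hsb⟩ := hc.choose_spec
      refine ⟨hc.choose.1, hc.choose.2, hd', hu', ?_, ?_⟩
      · rw [← Option.some_get hsa, hp.1]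
      · rw [← Option.some_get hsb, hp.2]
  · rintro ⟨h₁, h₂, hd, hu, ha, hb⟩
    exact conjProj_eq_some hA hB hd hu ha hb

/-! ### the combined abstract step -/

/-- The generic combination used in `conjProg` (modulo the pairing function). -/
def combine (pair : X → Y → Z) : AbsDom X → AbsDom Y → AbsDom Z
  | .bot, _ => .bot
  | _, .bot => .bot
  | .val a, .val b => .val (pair a b)
  | ma, nb => djoin (toFour ma) (toFour nb)

section Master

variable {πA : Heap L V → Option X} {πB : Heap L V → Option Y}
  {f g : Heap L V → Set (Heap L V)}
  {π : Heap L V → Option Z} {pair : X → Y → Z}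

/-- Framed computation of the outputs of `f;g` on a split heap plus a frame. -/
theorem FR (hA : Locality πA) (hB : Locality πB)
    (hf : LocalAction f) (hg : LocalAction g)
    (hcf : CapturesProg πA f) (hcg : CapturesProg πB g)
    (hsplit : ∀ h a b, π h = some (pair a b) ↔
      ∃ h₁ h₂, HDisj h₁ h₂ ∧ hunion h₁ h₂ = h ∧ πA h₁ = some a ∧ πB h₂ = some b)
    {h₁ h₂ : Heap L V} (h' : Heap L V) {a : X} {b : Y} (hd12 : HDisj h₁ h₂)
    (ha : πA h₁ = some a) (hb : πB h₂ = some b)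
    (hs1 : h₁ ∈ suff f) (hs2 : h₂ ∈ suff g)
    (hd' : HDisj (hunion h₁ h₂) h') :
    ∃ a' b', alpha πA (f h₁) = .val a' ∧ alpha πB (g h₂) = .val b' ∧
      hunion (hunion h₁ h₂) h' ∈ suff (pseq f g) ∧
      (pseq f g (hunion (hunion h₁ h₂) h')).Nonempty ∧
      ∀ r ∈ pseq f g (hunion (hunion h₁ h₂) h'), π (hsub r h') = some (pair a' b') := by
  set h := hunion h₁ h₂ with hh
  have hd1' : HDisj h₁ h' := (hdisj_hunion_left.mp hd').1
  have hd2' : HDisj h₂ h' := (hdisj_hunion_left.mp hd').2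
  have hd1w : HDisj h₁ (hunion h₂ h') := hdisj_hunion_right.mpr ⟨hd12, hd1'⟩
  have hassoc : hunion h h' = hunion h₁ (hunion h₂ h') := hunion_assoc _ _ _
  obtain ⟨a', ha'⟩ := hcf.2.1 h₁ ⟨mem_purv ha, hs1⟩
  obtain ⟨b', hb'⟩ := hcg.2.1 h₂ ⟨mem_purv hb, hs2⟩
  refine ⟨a', b', ha', hb', ?_⟩
  have hfsub := capture_frame hcf ha hs1 ha' hd1w
  have hfne : f (hunion h h') ≠ ∅ := by
    rw [hassoc]; exact (hf h₁ hs1 _ hd1w).1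
  have hk_fact : ∀ k ∈ f (hunion h h'),
      g k ≠ ∅ ∧ ∀ r ∈ g k, π (hsub r h') = some (pair a' b') := by
    intro k hk
    rw [hassoc] at hk
    obtain ⟨j, hdwj, huwj⟩ := (hf h₁ hs1 _ hd1w).2 k hk
    have hja : πA j = some a' := by
      rw [← sub_decomp hdwj huwj]; exact hfsub k hk
    have hd2j : HDisj h₂ j := (hdisj_hunion_left.mp hdwj).1
    have hd'j : HDisj h' j := (hdisj_hunion_left.mp hdwj).2
    have hd2w2 : HDisj h₂ (hunion h' j) := hdisj_hunion_right.mpr ⟨hd2', hd2j⟩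
    have hk2 : hunion h₂ (hunion h' j) = k := by rw [← hunion_assoc]; exact huwj
    have hgk := hg h₂ hs2 (hunion h' j) hd2w2
    refine ⟨by rw [← hk2]; exact hgk.1, ?_⟩
    intro r hr
    have hr' : r ∈ g (hunion h₂ (hunion h' j)) := by rw [hk2]; exact hr
    have hrb : πB (hsub r (hunion h' j)) = some b' :=
      capture_frame hcg hb hs2 hb' hd2w2 r hr'
    obtain ⟨t, hdwt, huwt⟩ := hgk.2 r hr'
    have htb : πB t = some b' := by rw [← sub_decomp hdwt huwt]; exact hrb
    have hd't : HDisj h' t := (hdisj_hunion_left.mp hdwt).1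
    have hdjt : HDisj j t := (hdisj_hunion_left.mp hdwt).2
    have hd'jt : HDisj h' (hunion j t) := hdisj_hunion_right.mpr ⟨hd'j, hd't⟩
    have hr_eq : hunion h' (hunion j t) = r := by rw [← hunion_assoc]; exact huwt
    rw [sub_decomp hd'jt hr_eq]
    exact (hsplit _ a' b').mpr ⟨j, t, hdjt, rfl, hja, htb⟩
  have hsubsuff : f (hunion h h') ⊆ suff g := fun k hk => (hk_fact k hk).1
  have hps : pseq f g (hunion h h') = ⋃ k ∈ f (hunion h h'), g k :=
    tbar_of_subset hsubsuff
  obtain ⟨k, hk⟩ := Set.nonempty_iff_ne_empty.mpr hfne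
  obtain ⟨r, hr⟩ := Set.nonempty_iff_ne_empty.mpr (hk_fact k hk).1
  have hne : (pseq f g (hunion h h')).Nonempty := by
    rw [hps]; exact ⟨r, Set.mem_biUnion hk hr⟩
  refine ⟨hne.ne_empty, hne, ?_⟩
  intro r' hr'
  rw [hps] at hr'
  simp only [Set.mem_iUnion] at hr'
  obtain ⟨k', hk', hrk'⟩ := hr'
  exact (hk_fact k' hk').2 r' hrk'

/-- Sufficiency of a split heap for the sequence forces sufficiency of the parts. -/
theorem SS_mp (hf : LocalAction f)
    (hcf : CapturesProg πA f) (hcg : CapturesProg πB g)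
    {h₁ h₂ : Heap L V} {a : X} {b : Y} (hd12 : HDisj h₁ h₂)
    (ha : πA h₁ = some a) (hb : πB h₂ = some b)
    (hsuff : hunion h₁ h₂ ∈ suff (pseq f g)) : h₁ ∈ suff f ∧ h₂ ∈ suff g := by
  have hfne : f (hunion h₁ h₂) ≠ ∅ := by
    intro hemp
    have : pseq f g (hunion h₁ h₂) = ∅ := by
      rw [pseq, hemp, tbar_empty]
    exact hsuff this
  have hs1 : h₁ ∈ suff f := by
    by_contra hns
    exact hfne (capture_never hcf ha hns h₂ hd12)
  refine ⟨hs1, ?_⟩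
  have hsubsuff : f (hunion h₁ h₂) ⊆ suff g := by
    by_contra hns
    exact hsuff (by rw [pseq, tbar_of_not_subset hns])
  obtain ⟨k, hk⟩ := Set.nonempty_iff_ne_empty.mpr hfne
  obtain ⟨j, hdj, huj⟩ := (hf h₁ hs1 h₂ hd12).2 k hk
  by_contra hns
  have hgk : g k = ∅ := by rw [← huj]; exact capture_never hcg hb hns j hdj
  exact (hsubsuff hk) hgk

/-- If either part is insufficient, the sequence is nowhere sufficient above the split. -/
theorem NS (hB : Locality πB) (hf : LocalAction f)
    (hcf : CapturesProg πA f) (hcg : CapturesProg πB g)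
    {h₁ h₂ : Heap L V} {a : X} {b : Y} (hd12 : HDisj h₁ h₂)
    (ha : πA h₁ = some a) (hb : πB h₂ = some b)
    (hns : h₁ ∉ suff f ∨ h₂ ∉ suff g) {h' : Heap L V}
    (hd' : HDisj (hunion h₁ h₂) h') :
    pseq f g (hunion (hunion h₁ h₂) h') = ∅ := by
  by_contra hne
  have hsuff : hunion (hunion h₁ h₂) h' ∈ suff (pseq f g) := hne
  have hd1' : HDisj h₁ h' := (hdisj_hunion_left.mp hd').1
  have hd2' : HDisj h₂ h' := (hdisj_hunion_left.mp hd').2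
  have hd1w : HDisj h₁ (hunion h₂ h') := hdisj_hunion_right.mpr ⟨hd12, hd1'⟩
  have hb' : πB (hunion h₂ h') = some b := by
    rw [hB _ _ hd2' (by simp [hb]), hb]
  have hsuff' : hunion h₁ (hunion h₂ h') ∈ suff (pseq f g) := by
    rw [← hunion_assoc]; exact hsuff
  obtain ⟨hs1, hs2⟩ := SS_mp hf hcf hcg hd1w ha hb' hsuff'
  rcases hns with hns | hns
  · exact hns hs1
  · exact hs2 (capture_never hcg hb hns h' hd2')

theorem ale_top (z : AbsDom X) : ale z .top := by cases z <;> simp [ale]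

theorem ale_bot_right {z : AbsDom X} : ale z .bot ↔ z = .bot := by
  cases z <;> simp [ale]

/-- The master lemma: soundness and capture for the sequence on a conjunction-like
abstraction described by a pairing function. -/
theorem master (hA : Locality πA) (hB : Locality πB)
    (hf : LocalAction f) (hg : LocalAction g)
    {m : X → AbsDom X} {n : Y → AbsDom Y}
    (hm : Sound πA m f) (hcf : CapturesProg πA f)
    (hn : Sound πB n g) (hcg : CapturesProg πB g)
    (hsplit : ∀ h a b, π h = some (pair a b) ↔
      ∃ h₁ h₂, HDisj h₁ h₂ ∧ hunion h₁ h₂ = h ∧ πA h₁ = some a ∧ πB h₂ = some b)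
    (hrange : ∀ h z, π h = some z → ∃ a b, z = pair a b)
    {M : Z → AbsDom Z}
    (hM : ∀ a b, M (pair a b) = combine pair (m a) (n b)) :
    Sound π M (pseq f g) ∧ CapturesProg π (pseq f g) := by
  -- plain (unframed) version of FR
  have FR0 : ∀ {h₁ h₂ : Heap L V} {a : X} {b : Y}, HDisj h₁ h₂ →
      πA h₁ = some a → πB h₂ = some b → h₁ ∈ suff f → h₂ ∈ suff g →
      ∃ a' b', alpha πA (f h₁) = .val a' ∧ alpha πB (g h₂) = .val b' ∧
        hunion h₁ h₂ ∈ suff (pseq f g) ∧ (pseq f g (hunion h₁ h₂)).Nonempty ∧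
        ∀ r ∈ pseq f g (hunion h₁ h₂), π r = some (pair a' b') := by
    intro h₁ h₂ a b hd12 ha hb hs1 hs2
    obtain ⟨a', b', ha', hb', hsf, hne, hres⟩ :=
      FR hA hB hf hg hcf hcg hsplit hemp hd12 ha hb hs1 hs2 (hdisj_hemp _)
    rw [hunion_hemp] at hsf hne hres
    exact ⟨a', b', ha', hb', hsf, hne, fun r hr => by
      rw [← hsub_hemp r]; exact hres r hr⟩
  constructor
  · -- Soundness
    constructor
    · -- condition (1)
      intro C x hle
      cases x with
      | bot =>
        rw [ale_bot_right, alpha_eq_bot_iff] at hle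
        rw [hle, tbar_empty, alpha_empty]
        exact ale_bot_left _
      | cross => exact ale_top _
      | check => exact ale_top _
      | top => exact ale_top _
      | val z =>
        rw [ale_val_right] at hle
        rcases hle with hle | hle
        · rw [alpha_eq_bot_iff] at hle
          rw [hle, tbar_empty, alpha_empty]
          exact ale_bot_left _
        obtain ⟨hCne, hall⟩ := alpha_eq_val hle
        show ale _ (M z)
        by_cases hsub : C ⊆ suff (pseq f g)
        swap
        · rw [tbar_of_not_subset hsub, alpha_empty]
          exact ale_bot_left _
        obtain ⟨h₀, hh₀⟩ := Set.nonempty_iff_ne_empty.mpr hCne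
        obtain ⟨a, b, rfl⟩ := hrange h₀ z (hall h₀ hh₀)
        have hfacts : ∀ h ∈ C, ∃ a' b',
            ale (.val a' : AbsDom X) (m a) ∧ ale (.val b' : AbsDom Y) (n b) ∧
            (pseq f g h).Nonempty ∧ ∀ r ∈ pseq f g h, π r = some (pair a' b') := by
          intro h hh
          obtain ⟨h₁, h₂, hd12, hu, ha, hb⟩ := (hsplit h a b).mp (hall h hh)
          have hs : hunion h₁ h₂ ∈ suff (pseq f g) := by rw [hu]; exact hsub hh
          obtain ⟨hs1, hs2⟩ := SS_mp hf hcf hcg hd12 ha hb hs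
          obtain ⟨a', b', ha', hb', _, hne, hres⟩ := FR0 hd12 ha hb hs1 hs2
          rw [hu] at hne hres
          exact ⟨a', b', sound_val hm ha hs1 ha', sound_val hn hb hs2 hb', hne, hres⟩
        by_cases hv : (∃ a₀, m a = .val a₀) ∧ (∃ b₀, n b = .val b₀)
        · obtain ⟨⟨a₀, hMa⟩, ⟨b₀, hNb⟩⟩ := hv
          have hall' : ∀ r ∈ tbar (pseq f g) C, π r = some (pair a₀ b₀) := by
            rw [tbar_of_subset hsub]
            intro r hr
            simp only [Set.mem_iUnion] at hr
            obtain ⟨h, hh, hr⟩ := hr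
            obtain ⟨a', b', hma, hnb, _, hres⟩ := hfacts h hh
            rw [hMa] at hma; rw [hNb] at hnb
            simp only [ale] at hma hnb
            rw [← hma, ← hnb]
            exact hres r hr
          have hnet : (tbar (pseq f g) C).Nonempty := by
            obtain ⟨_, _, _, _, ⟨r, hr⟩, _⟩ := hfacts h₀ hh₀
            rw [tbar_of_subset hsub]
            exact ⟨r, Set.mem_biUnion hh₀ hr⟩
          rw [alpha_const hnet hall', hM a b, hMa, hNb]
          simp [combine, ale]
        · have hsome : ∀ r ∈ tbar (pseq f g) C, (π r).isSome := by
            rw [tbar_of_subset hsub]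
            intro r hr
            simp only [Set.mem_iUnion] at hr
            obtain ⟨h, hh, hr⟩ := hr
            obtain ⟨a', b', _, _, _, hres⟩ := hfacts h hh
            rw [hres r hr]; rfl
          obtain ⟨a', b', hma, hnb, _, _⟩ := hfacts h₀ hh₀
          have hma3 : m a = .val a' ∨ m a = .check ∨ m a = .top := by
            rcases hx : m a with _ | _ | _ | _ | u <;> rw [hx] at hma <;>
              simp only [ale] at hma
            · right; left; rfl
            · right; right; rfl
            · left; rw [hma]
          have hnb3 : n b = .val b' ∨ n b = .check ∨ n b = .top := by
            rcases hy : n b with _ | _ | _ | _ | w <;> rw [hy] at hnb <;>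
              simp only [ale] at hnb
            · right; left; rfl
            · right; right; rfl
            · left; rw [hnb]
          have hMtop : M (pair a b) = .check ∨ M (pair a b) = .top := by
            rw [hM a b]
            rcases hma3 with h1 | h1 | h1 <;> rcases hnb3 with h2 | h2 | h2 <;>
              rw [h1, h2] <;>
                first
                  | (exact Or.inl rfl)
                  | (exact Or.inr rfl)
                  | (exact absurd ⟨⟨a', h1⟩, ⟨b', h2⟩⟩ hv)
          rcases alpha_cases_of_some hsome with hc | hc | ⟨x, hc⟩ <;> rw [hc] <;>
            rcases hMtop with hMt | hMt <;> rw [hMt] <;> simp [ale]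
    · -- condition (2)
      rintro C ⟨z, hz⟩ hbot
      obtain ⟨hCne, hall⟩ := alpha_eq_val hz
      obtain ⟨h₀, hh₀⟩ := Set.nonempty_iff_ne_empty.mpr hCne
      obtain ⟨a, b, rfl⟩ := hrange h₀ _ (hall h₀ hh₀)
      rw [hz]
      show M (pair a b) = .bot
      rw [alpha_eq_bot_iff] at hbot
      have hex : ∃ h ∈ C, h ∉ suff (pseq f g) := by
        by_contra hno
        push_neg at hno
        rw [tbar_of_subset hno] at hbot
        have h1 : pseq f g h₀ ⊆ ∅ := hbot ▸ Set.subset_biUnion_of_mem hh₀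
        exact hno h₀ hh₀ (Set.subset_empty_iff.mp h1)
      obtain ⟨h, hh, hns⟩ := hex
      obtain ⟨h₁, h₂, hd12, hu, ha, hb⟩ := (hsplit h a b).mp (hall h hh)
      by_cases hs1 : h₁ ∈ suff f
      · by_cases hs2 : h₂ ∈ suff g
        · exfalso
          obtain ⟨_, _, _, _, hsf, _, _⟩ := FR0 hd12 ha hb hs1 hs2
          rw [hu] at hsf
          exact hns hsf
        · have hnb : n b = .bot := sound_bot hn hb hs2
          rw [hM a b, hnb]
          cases m a <;> rfl
      · have hma : m a = .bot := sound_bot hm ha hs1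
        rw [hM a b, hma]
        cases n b <;> rfl
  · -- CapturesProg
    refine ⟨?_, ?_, ?_⟩
    · -- purview ⊆ footprint
      intro h hh
      obtain ⟨z, hz⟩ := Option.isSome_iff_exists.mp hh
      obtain ⟨a, b, rfl⟩ := hrange h z hz
      obtain ⟨h₁, h₂, hd12, hu, ha, hb⟩ := (hsplit h a b).mp hz
      by_cases hs1 : h₁ ∈ suff f
      · by_cases hs2 : h₂ ∈ suff g
        · left
          obtain ⟨_, _, _, _, hsf, _, _⟩ := FR0 hd12 ha hb hs1 hs2
          rw [hu] at hsf
          exact hsf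
        · right
          intro h' hd'
          rw [← hu] at hd' ⊢
          exact not_suff_iff.mpr (NS hB hf hcf hcg hd12 ha hb (Or.inr hs2) hd')
      · right
        intro h' hd'
        rw [← hu] at hd' ⊢
        exact not_suff_iff.mpr (NS hB hf hcf hcg hd12 ha hb (Or.inl hs1) hd')
    · -- sufficient heaps map to proper values
      rintro h ⟨hp, hs⟩
      obtain ⟨z, hz⟩ := Option.isSome_iff_exists.mp hp
      obtain ⟨a, b, rfl⟩ := hrange h z hz
      obtain ⟨h₁, h₂, hd12, hu, ha, hb⟩ := (hsplit h a b).mp hz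
      have hs' : hunion h₁ h₂ ∈ suff (pseq f g) := by rw [hu]; exact hs
      obtain ⟨hs1, hs2⟩ := SS_mp hf hcf hcg hd12 ha hb hs'
      obtain ⟨a', b', _, _, _, hne, hres⟩ := FR0 hd12 ha hb hs1 hs2
      rw [hu] at hne hres
      exact ⟨pair a' b', alpha_const hne hres⟩
    · -- frame property
      rintro h ⟨hp, _⟩ h' hd'
      obtain ⟨z, hz⟩ := Option.isSome_iff_exists.mp hp
      obtain ⟨a, b, rfl⟩ := hrange h z hz
      obtain ⟨h₁, h₂, hd12, hu, ha, hb⟩ := (hsplit h a b).mp hz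
      by_cases hs12 : h₁ ∈ suff f ∧ h₂ ∈ suff g
      · obtain ⟨hs1, hs2⟩ := hs12
        obtain ⟨a', b', ha', hb', _, hne, hres⟩ :=
          FR hA hB hf hg hcf hcg hsplit h' hd12 ha hb hs1 hs2 (by rw [hu]; exact hd')
        rw [hu] at hne hres
        obtain ⟨a'', b'', ha'', hb'', _, hne0, hres0⟩ := FR0 hd12 ha hb hs1 hs2
        rw [hu] at hne0 hres0
        rw [ha'] at ha''; rw [hb'] at hb''
        simp only [AbsDom.val.injEq] at ha'' hb''
        subst ha''; subst hb''
        rw [alpha_const hne0 hres0]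
        apply alpha_const (hne.image _)
        rintro k ⟨r, hr, rfl⟩
        exact hres r hr
      · have hns : h₁ ∉ suff f ∨ h₂ ∉ suff g := by tauto
        have e1 : pseq f g (hunion h h') = ∅ := by
          rw [← hu] at hd' ⊢
          exact NS hB hf hcf hcg hd12 ha hb hns hd'
        have e2 : pseq f g h = ∅ := by
          have e3 := NS hB hf hcf hcg hd12 ha hb hns (hdisj_hemp (hunion h₁ h₂))
          rwa [hunion_hemp, hu] at e3
        rw [e1, e2, Set.image_empty]

end Master

theorem conjProg_eq_combine (m : X → AbsDom X) (n : Y → AbsDom Y) (a : X) (b : Y) :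
    conjProg m n (a, b) = combine Prod.mk (m a) (n b) := by
  show (match m a, n b with
    | .bot, _ => .bot
    | _, .bot => .bot
    | .val a, .val b => .val (a, b)
    | ma, nb => djoin (toFour ma) (toFour nb)) = combine Prod.mk (m a) (n b)
  cases m a <;> cases n b <;> rfl

theorem conjProg_eq_combine_swap (m : X → AbsDom X) (n : Y → AbsDom Y) (b : Y) (a : X) :
    conjProg m n ((fun (b : Y) (a : X) => (a, b)) b a) =
      combine (fun (b : Y) (a : X) => (a, b)) (n b) (m a) := by
  show (match m a, n b with
    | .bot, _ => .bot
    | _, .bot => .bot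
    | .val a, .val b => .val (a, b)
    | ma, nb => djoin (toFour ma) (toFour nb)) =
      combine (fun (b : Y) (a : X) => (a, b)) (n b) (m a)
  cases m a <;> cases n b <;> rfl

end CS

/-- compound program soundness theorem. -/
theorem compound_soundness {L V X Y : Type} [Countable L] [Infinite L]
    (πA : Heap L V → Option X) (πB : Heap L V → Option Y)
    (hA : Locality πA) (hB : Locality πB)
    (f g : Heap L V → Set (Heap L V)) (hf : LocalAction f) (hg : LocalAction g)
    (m : X → AbsDom X) (n : Y → AbsDom Y)
    (hm : Sound πA m f) (hcf : CapturesProg πA f)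
    (hn : Sound πB n g) (hcg : CapturesProg πB g) :
    (Sound (conjProj πA πB) (conjProg m n) (pseq f g) ∧
      CapturesProg (conjProj πA πB) (pseq f g)) ∧
    (Sound (conjProj πA πB) (conjProg m n) (pseq g f) ∧
      CapturesProg (conjProj πA πB) (pseq g f)) := by
  have hsplit1 : ∀ (h : Heap L V) (a : X) (b : Y),
      conjProj πA πB h = some (Prod.mk a b) ↔
        ∃ h₁ h₂, HDisj h₁ h₂ ∧ hunion h₁ h₂ = h ∧ πA h₁ = some a ∧ πB h₂ = some b :=
    fun _ _ _ => CS.conjProj_some_iff hA hB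
  have hrange1 : ∀ (h : Heap L V) (z : X × Y), conjProj πA πB h = some z →
      ∃ a b, z = Prod.mk a b := fun _ z _ => ⟨z.1, z.2, rfl⟩
  have H1 := CS.master hA hB hf hg hm hcf hn hcg hsplit1 hrange1
    (CS.conjProg_eq_combine m n)
  have hsplit2 : ∀ (h : Heap L V) (b : Y) (a : X),
      conjProj πA πB h = some ((fun (b : Y) (a : X) => (a, b)) b a) ↔
        ∃ h₂ h₁, HDisj h₂ h₁ ∧ hunion h₂ h₁ = h ∧ πB h₂ = some b ∧ πA h₁ = some a := by
    intro h b a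
    rw [CS.conjProj_some_iff hA hB]
    constructor
    · rintro ⟨h₁, h₂, hd, hu, ha, hb⟩
      exact ⟨h₂, h₁, CS.hdisj_symm hd,
        (CS.hunion_comm (CS.hdisj_symm hd)).trans hu, hb, ha⟩
    · rintro ⟨h₂, h₁, hd, hu, hb, ha⟩
      exact ⟨h₁, h₂, CS.hdisj_symm hd,
        (CS.hunion_comm (CS.hdisj_symm hd)).trans hu, ha, hb⟩
  have hrange2 : ∀ (h : Heap L V) (z : X × Y), conjProj πA πB h = some z →
      ∃ (b : Y) (a : X), z = (a, b) := fun _ z _ => ⟨z.2, z.1, rfl⟩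
  have H2 := CS.master hB hA hg hf hn hcg hm hcf hsplit2 hrange2
    (CS.conjProg_eq_combine_swap m n)
  exact ⟨H1, H2⟩
end

section
/- Abstract frame rule: if m soundly abstracts f in A and A captures f, then for any abstraction B, the conjunction m * id (where id is the identity abstract program on X_B, id(b) = b) soundly abstracts f in A * B, and A * B captures f. -/
open HC

/-! A heap in the purview of `A * B` splits as `h₁ + h₂` with `h₁` in the purview of `A` and `h₂`
in that of `B`. Because `A` captures `f`, the program already runs on `h₁`, and by locality every
result of `f (h₁ + h₂)` has the form `k₁ + h₂`, where `π_A k₁` is the single abstract value of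
`f h₁`. So the `B`-component is untouched and the `A`-component is predicted by `m`. Soundness
only has to be checked on singletons, because `α` is the lower adjoint of `γ`. -/

namespace HC

variable {L V X Y : Type*}

section Heaps

@[ext]
theorem Heap.ext {h₁ h₂ : Heap L V} (h : ∀ l, h₁.toFun l = h₂.toFun l) : h₁ = h₂ := by
  cases h₁; cases h₂
  simp only [Heap.mk.injEq]
  exact funext h

theorem hdisj_iff {a b : Heap L V} :
    HDisj a b ↔ ∀ l, a.toFun l = none ∨ b.toFun l = none := by
  simp only [HDisj, Set.disjoint_left, Heap.dom, Set.mem_ofPred_eq]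
  exact forall_congr' fun l => by tauto

theorem HDisj.symm {a b : Heap L V} (h : HDisj a b) : HDisj b a := Disjoint.symm h

theorem hunion_toFun (a b : Heap L V) (l : L) :
    (hunion a b).toFun l = (a.toFun l).elim (b.toFun l) some := rfl

theorem hsub_toFun (k h : Heap L V) (l : L) :
    (hsub k h).toFun l = (h.toFun l).elim (k.toFun l) (fun _ => none) := rfl

theorem hunion_assoc (a b c : Heap L V) :
    hunion (hunion a b) c = hunion a (hunion b c) := by
  ext l : 1
  simp only [hunion_toFun]
  cases a.toFun l <;> rfl

theorem hunion_comm {a b : Heap L V} (hd : HDisj a b) : hunion a b = hunion b a := by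
  ext l : 1
  simp only [hunion_toFun]
  rcases hdisj_iff.1 hd l with h | h <;> simp only [h] <;> cases a.toFun l <;>
    cases b.toFun l <;> simp_all

theorem dom_hunion (a b : Heap L V) : (hunion a b).dom = a.dom ∪ b.dom := by
  ext l
  simp only [Heap.dom, Set.mem_ofPred_eq, Set.mem_union, hunion_toFun]
  rcases a.toFun l with _ | v <;> simp

theorem hdisj_hunion_left {a b c : Heap L V} :
    HDisj (hunion a b) c ↔ HDisj a c ∧ HDisj b c := by
  rw [HDisj, dom_hunion, Set.disjoint_union_left]
  rfl

theorem hdisj_hunion_right {a b c : Heap L V} :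
    HDisj a (hunion b c) ↔ HDisj a b ∧ HDisj a c := by
  rw [HDisj, dom_hunion, Set.disjoint_union_right]
  rfl

theorem hsub_hunion {a b : Heap L V} (hd : HDisj a b) : hsub (hunion a b) a = b := by
  ext l : 1
  simp only [hsub_toFun, hunion_toFun]
  rcases ha : a.toFun l with _ | v
  · rfl
  · simp [(hdisj_iff.1 hd l).resolve_left (by simp [ha])]

theorem hsub_hunion_hunion {a b c : Heap L V} (hac : HDisj a c) (hbc : HDisj b c) :
    hsub (hunion a (hunion b c)) c = hunion a b := by
  ext l : 1
  simp only [hsub_toFun, hunion_toFun]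
  rcases hc : c.toFun l with _ | v
  · rcases a.toFun l with _ | v <;> rcases b.toFun l with _ | w <;> rfl
  · have ha : a.toFun l = none := (hdisj_iff.1 hac l).resolve_right (by simp [hc])
    have hb : b.toFun l = none := (hdisj_iff.1 hbc l).resolve_right (by simp [hc])
    simp [ha, hb]

end Heaps

section AbstractDomain

theorem ale_refl (z : AbsDom X) : ale z z := by cases z <;> trivial

theorem ale_top (z : AbsDom X) : ale z .top := by cases z <;> trivial

theorem bot_ale (z : AbsDom X) : ale .bot z := trivial

theorem ale_trans {x y z : AbsDom X} (hxy : ale x y) (hyz : ale y z) : ale x z := by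
  cases x <;> cases y <;> cases z <;> simp_all [ale]

theorem ale_val_iff {z : AbsDom X} {p : X} : ale z (.val p) ↔ z = .bot ∨ z = .val p := by
  cases z <;> simp [ale, eq_comm]

variable {π : Heap L V → Option X} {C : Set (Heap L V)} {h : Heap L V}

theorem liftProj_le_val_iff {p : X} : ale (liftProj π h) (.val p) ↔ π h = some p := by
  rcases hπ : π h with _ | q <;> simp [liftProj, hπ, ale_val_iff]

theorem liftProj_le_alpha (hh : h ∈ C) : ale (liftProj π h) (alpha π C) := by
  unfold alpha
  split_ifs with hempty hconst hsome hnone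
  · exact absurd hh (hempty ▸ Set.notMem_empty h)
  · simp [liftProj, hconst.choose_spec h hh, ale]
  · obtain ⟨q, hq⟩ := Option.isSome_iff_exists.1 (hsome h hh)
    simp [liftProj, hq, ale]
  · simp [liftProj, hnone h hh, ale]
  · exact ale_top _

theorem alpha_le_iff_subset_gamma {z : AbsDom X} : ale (alpha π C) z ↔ C ⊆ gamma π z := by
  refine ⟨fun hle _ hh => ale_trans (liftProj_le_alpha hh) hle, fun hC => ?_⟩
  unfold alpha
  split_ifs with hempty hconst hsome hnone
  · exact bot_ale z
  · obtain ⟨h₀, hh₀⟩ := Set.nonempty_iff_ne_empty.2 hempty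
    simpa [gamma, liftProj, hconst.choose_spec h₀ hh₀] using hC hh₀
  · obtain ⟨h₀, hh₀⟩ := Set.nonempty_iff_ne_empty.2 hempty
    obtain ⟨q, hq⟩ := Option.isSome_iff_exists.1 (hsome h₀ hh₀)
    have hq₀ : ale (.val q) z := by simpa [gamma, liftProj, hq] using hC hh₀
    cases z with
    | val p => exact (hconst ⟨p, fun h hh => liftProj_le_val_iff.1 (hC hh)⟩).elim
    | _ => simp_all [ale]
  · obtain ⟨h₀, hh₀⟩ := Set.nonempty_iff_ne_empty.2 hempty
    simpa [gamma, liftProj, hnone h₀ hh₀] using hC hh₀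
  · simp only [not_forall] at hsome hnone
    obtain ⟨h₁, hh₁, hnone₁⟩ := hsome
    obtain ⟨h₂, hh₂, hsome₂⟩ := hnone
    obtain ⟨q, hq⟩ := Option.ne_none_iff_exists'.1 hsome₂
    have hcross : ale .cross z := by
      simpa [gamma, liftProj, Option.not_isSome_iff_eq_none.1 hnone₁] using hC hh₁
    have hval : ale (.val q) z := by simpa [gamma, liftProj, hq] using hC hh₂
    cases z <;> simp_all [ale]

theorem alpha_eq_bot_iff : alpha π C = .bot ↔ C = ∅ := by
  unfold alpha
  split_ifs <;> simp_all

theorem alpha_eq_val_iff {p : X} : alpha π C = .val p ↔ C.Nonempty ∧ ∀ h ∈ C, π h = some p := by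
  have hle : ale (alpha π C) (.val p) ↔ ∀ h ∈ C, π h = some p := by
    simp only [alpha_le_iff_subset_gamma, Set.subset_def, gamma, Set.mem_ofPred_eq,
      liftProj_le_val_iff]
  rw [Set.nonempty_iff_ne_empty, Ne, ← alpha_eq_bot_iff (π := π), ← hle, ale_val_iff]
  constructor
  · intro h; simp [h]
  · rintro ⟨hne, hbot | hval⟩
    exacts [(hne hbot).elim, hval]

theorem alpha_empty (π : Heap L V → Option X) : alpha π ∅ = .bot := alpha_eq_bot_iff.2 rfl

theorem alpha_singleton {p : X} (hp : π h = some p) : alpha π {h} = .val p :=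
  alpha_eq_val_iff.2 ⟨Set.singleton_nonempty h, fun _ hk => hk ▸ hp⟩

end AbstractDomain

section Programs

variable {f : Heap L V → Set (Heap L V)} {C : Set (Heap L V)} {h h₁ h₂ k r : Heap L V}

theorem mem_tbar : k ∈ tbar f C ↔ C ⊆ suff f ∧ ∃ h ∈ C, k ∈ f h := by
  unfold tbar
  split_ifs with hC <;> simp [hC]

theorem tbar_singleton : tbar f {h} = f h := by
  ext k
  simp only [mem_tbar, Set.singleton_subset_iff, suff, Set.mem_ofPred_eq, Set.mem_singleton_iff,
    exists_eq_left, and_iff_right_iff_imp]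
  exact fun hk => Set.nonempty_iff_ne_empty.1 ⟨k, hk⟩

theorem sound_iff {π : Heap L V → Option X} {M : X → AbsDom X} :
    Sound π M f ↔ (∀ h p, π h = some p → ale (alpha π (f h)) (M p)) ∧
      (∀ h p, π h = some p → f h = ∅ → M p = .bot) := by
  constructor
  · rintro ⟨hle, hbot⟩
    refine ⟨fun h p hp => ?_, fun h p hp he => ?_⟩
    · simpa [tbar_singleton, alpha_singleton hp, mhat] using
        hle {h} (.val p) (alpha_singleton hp ▸ ale_refl _)
    · simpa [alpha_singleton hp, mhat] using
        hbot {h} ⟨p, alpha_singleton hp⟩ (by rw [tbar_singleton, he, alpha_empty])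
  · rintro ⟨hle, hbot⟩
    refine ⟨fun C z hC => ?_, fun C ⟨p, hp⟩ he => ?_⟩
    · rw [alpha_le_iff_subset_gamma] at hC ⊢
      rintro k hk
      obtain ⟨-, h, hh, hk⟩ := mem_tbar.1 hk
      have hz : ale (liftProj π h) z := hC hh
      cases z with
      | bot => rcases hπ : π h <;> simp [liftProj, hπ, ale] at hz
      | val p =>
        exact alpha_le_iff_subset_gamma.1 (hle h p (liftProj_le_val_iff.1 hz)) hk
      | _ => exact ale_top _
    · obtain ⟨⟨h₀, hh₀⟩, hall⟩ := alpha_eq_val_iff.1 hp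
      obtain ⟨h, hh, hfh⟩ : ∃ h ∈ C, f h = ∅ := by
        by_contra! hsuff
        obtain ⟨k, hk⟩ := hsuff h₀ hh₀
        exact Set.notMem_empty k
          (alpha_eq_bot_iff.1 he ▸ mem_tbar.2 ⟨fun h hh => (hsuff h hh).ne_empty, h₀, hh₀, hk⟩)
      rw [hp]
      exact hbot h p (hall h hh) hfh

theorem eq_empty_of_mem_foot (hfoot : h ∈ foot f) (he : f h = ∅) (hd : HDisj h r) :
    f (hunion h r) = ∅ := by
  rcases hfoot with hs | hn
  · exact absurd he hs
  · simpa [suff] using hn r hd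

theorem LocalAction.hunion_mem_foot (hf : LocalAction f) (hfoot : h₁ ∈ foot f)
    (hd : HDisj h₁ h₂) : hunion h₁ h₂ ∈ foot f := by
  by_cases he : f h₁ = ∅
  · refine Or.inr fun r hr hs => hs ?_
    rw [hunion_assoc]
    exact eq_empty_of_mem_foot hfoot he (hdisj_hunion_right.2 ⟨hd, (hdisj_hunion_left.1 hr).1⟩)
  · exact Or.inl (hf h₁ he h₂ hd).1

theorem CapturesProg.exists_alpha_eq_val {π : Heap L V → Option X} (hcap : CapturesProg π f)
    {a : X} (ha : π h₁ = some a) (hd : HDisj h₁ h₂) (hs : f (hunion h₁ h₂) ≠ ∅) :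
    ∃ x, alpha π (f h₁) = .val x :=
  hcap.2.1 h₁ ⟨Option.isSome_of_eq_some ha,
    fun he => hs (eq_empty_of_mem_foot (hcap.1 (Option.isSome_of_eq_some ha)) he hd)⟩

theorem CapturesProg.exists_hunion_eq {π : Heap L V → Option X} (hf : LocalAction f)
    (hcap : CapturesProg π f) {a x : X} (ha : π h₁ = some a) (hd : HDisj h₁ r)
    (hx : alpha π (f h₁) = .val x) (hk : k ∈ f (hunion h₁ r)) :
    ∃ k₁, HDisj k₁ r ∧ hunion k₁ r = k ∧ π k₁ = some x := by
  have hs : f h₁ ≠ ∅ := (alpha_eq_val_iff.1 hx).1.ne_empty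
  obtain ⟨k₁, hdk, rfl⟩ := (hf h₁ hs r hd).2 k hk
  have hframe := hcap.2.2 h₁ ⟨Option.isSome_of_eq_some ha, Or.inl hs⟩ r hd
  rw [hx, alpha_eq_val_iff] at hframe
  refine ⟨k₁, hdk.symm, hunion_comm hdk.symm, ?_⟩
  simpa [hsub_hunion hdk] using hframe.2 _ ⟨_, hk, rfl⟩

end Programs

section Conjunction

variable {f : Heap L V → Set (Heap L V)} {h h₁ h₂ r : Heap L V}
  {πA : Heap L V → Option X} {πB : Heap L V → Option Y}

theorem Locality.apply_hunion_right {π : Heap L V → Option X} (hπ : Locality π)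
    (hd : HDisj h₁ h₂) (hs : (π h₂).isSome) : π (hunion h₁ h₂) = π h₂ :=
  hunion_comm hd ▸ hπ h₂ h₁ hd.symm hs

theorem conjProj_eq_some_iff (hA : Locality πA) (hB : Locality πB) {a : X} {b : Y} :
    conjProj πA πB h = some (a, b) ↔
      ∃ h₁ h₂, HDisj h₁ h₂ ∧ hunion h₁ h₂ = h ∧ πA h₁ = some a ∧ πB h₂ = some b := by
  constructor
  · intro hπ
    rw [conjProj] at hπ
    split at hπ
    case isTrue hsplit =>
      obtain ⟨hd, he, hsA, hsB⟩ := hsplit.choose_spec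
      simp only [Option.some.injEq, Prod.mk.injEq] at hπ
      exact ⟨_, _, hd, he, by simp [← hπ.1], by simp [← hπ.2]⟩
    case isFalse => simp at hπ
  · rintro ⟨h₁, h₂, hd, rfl, ha, hb⟩
    have hsplit : ∃ p : Heap L V × Heap L V, HDisj p.1 p.2 ∧ hunion p.1 p.2 = hunion h₁ h₂ ∧
        (πA p.1).isSome ∧ (πB p.2).isSome :=
      ⟨(h₁, h₂), hd, rfl, Option.isSome_of_eq_some ha, Option.isSome_of_eq_some hb⟩
    obtain ⟨hd', he', hsA, hsB⟩ := hsplit.choose_spec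
    -- locality makes the value independent of the split picked by `choose`
    have eA : πA hsplit.choose.1 = some a := by
      rw [← hA _ _ hd' hsA, he', hA _ _ hd (Option.isSome_of_eq_some ha), ha]
    have eB : πB hsplit.choose.2 = some b := by
      rw [← hB.apply_hunion_right hd' hsB, he', hB.apply_hunion_right hd
        (Option.isSome_of_eq_some hb), hb]
    simp [conjProj, hsplit, eA, eB]

theorem conjProg_eq_bot_of_left {m : X → AbsDom X} {n : Y → AbsDom Y} {a : X} (b : Y)
    (hma : m a = .bot) : conjProg m n (a, b) = .bot := by
  simp [conjProg, hma]

theorem ale_conjProg_val {m : X → AbsDom X} {a x : X} (b : Y) (hx : ale (.val x) (m a)) :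
    ale (.val (x, b)) (conjProg m AbsDom.val (a, b)) := by
  rcases hma : m a with _ | _ | _ | _ | y <;> rw [hma] at hx <;>
    simp_all [conjProg, ale, djoin, toFour]

variable (hA : Locality πA) (hB : Locality πB) (hf : LocalAction f) (hcap : CapturesProg πA f)
include hA hB hf hcap

theorem alpha_conjProj_apply_hunion {a x : X} {b : Y} (hd : HDisj h₁ h₂)
    (ha : πA h₁ = some a) (hb : πB h₂ = some b) (hx : alpha πA (f h₁) = .val x) :
    alpha (conjProj πA πB) (f (hunion h₁ h₂)) = .val (x, b) := by
  have hs : f h₁ ≠ ∅ := (alpha_eq_val_iff.1 hx).1.ne_empty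
  refine alpha_eq_val_iff.2 ⟨Set.nonempty_iff_ne_empty.2 (hf h₁ hs h₂ hd).1, fun k hk => ?_⟩
  obtain ⟨k₁, hdk, rfl, hk₁⟩ := hcap.exists_hunion_eq hf ha hd hx hk
  exact (conjProj_eq_some_iff hA hB).2 ⟨k₁, h₂, hdk, rfl, hk₁, hb⟩

theorem alpha_conjProj_image_hsub {a x : X} {b : Y} (hd : HDisj h₁ h₂)
    (hr : HDisj (hunion h₁ h₂) r) (ha : πA h₁ = some a) (hb : πB h₂ = some b)
    (hx : alpha πA (f h₁) = .val x) :
    alpha (conjProj πA πB) ((fun k => hsub k r) '' f (hunion (hunion h₁ h₂) r)) =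
      .val (x, b) := by
  have hs : f h₁ ≠ ∅ := (alpha_eq_val_iff.1 hx).1.ne_empty
  obtain ⟨hr₁, hr₂⟩ := hdisj_hunion_left.1 hr
  have hd' : HDisj h₁ (hunion h₂ r) := hdisj_hunion_right.2 ⟨hd, hr₁⟩
  rw [hunion_assoc]
  refine alpha_eq_val_iff.2
    ⟨(Set.nonempty_iff_ne_empty.2 (hf h₁ hs _ hd').1).image _, ?_⟩
  rintro _ ⟨k, hk, rfl⟩
  obtain ⟨k₁, hdk, rfl, hk₁⟩ := hcap.exists_hunion_eq hf ha hd' hx hk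
  obtain ⟨hdk₂, hdkr⟩ := hdisj_hunion_right.1 hdk
  dsimp only
  rw [hsub_hunion_hunion hdkr hr₂]
  exact (conjProj_eq_some_iff hA hB).2 ⟨k₁, h₂, hdk₂, rfl, hk₁, hb⟩

theorem Sound.conj_id {m : X → AbsDom X} (hm : Sound πA m f) :
    Sound (conjProj πA πB) (conjProg m AbsDom.val) f := by
  rw [sound_iff] at hm ⊢
  refine ⟨fun h ⟨a, b⟩ hπ => ?_, fun h ⟨a, b⟩ hπ he => ?_⟩
  · by_cases he : f h = ∅
    · rw [he, alpha_empty]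
      exact bot_ale _
    obtain ⟨h₁, h₂, hd, rfl, ha, hb⟩ := (conjProj_eq_some_iff hA hB).1 hπ
    obtain ⟨x, hx⟩ := hcap.exists_alpha_eq_val ha hd he
    rw [alpha_conjProj_apply_hunion hA hB hf hcap hd ha hb hx]
    exact ale_conjProg_val b (hx ▸ hm.1 h₁ a ha)
  · obtain ⟨h₁, h₂, hd, rfl, ha, -⟩ := (conjProj_eq_some_iff hA hB).1 hπ
    have he₁ : f h₁ = ∅ := by
      by_contra hs
      exact (hf h₁ hs h₂ hd).1 he
    exact conjProg_eq_bot_of_left b (hm.2 h₁ a ha he₁)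

theorem CapturesProg.conj : CapturesProg (conjProj πA πB) f := by
  refine ⟨fun h hp => ?_, fun h ⟨hp, hs⟩ => ?_, fun h ⟨hp, hfoot⟩ r hr => ?_⟩ <;>
    obtain ⟨⟨a, b⟩, hπ⟩ := Option.isSome_iff_exists.1 hp
  · obtain ⟨h₁, h₂, hd, rfl, ha, -⟩ := (conjProj_eq_some_iff hA hB).1 hπ
    exact hf.hunion_mem_foot (hcap.1 (Option.isSome_of_eq_some ha)) hd
  · obtain ⟨h₁, h₂, hd, rfl, ha, hb⟩ := (conjProj_eq_some_iff hA hB).1 hπ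
    obtain ⟨x, hx⟩ := hcap.exists_alpha_eq_val ha hd hs
    exact ⟨(x, b), alpha_conjProj_apply_hunion hA hB hf hcap hd ha hb hx⟩
  · by_cases he : f h = ∅
    · rw [he, eq_empty_of_mem_foot hfoot he hr, Set.image_empty]
    obtain ⟨h₁, h₂, hd, rfl, ha, hb⟩ := (conjProj_eq_some_iff hA hB).1 hπ
    obtain ⟨x, hx⟩ := hcap.exists_alpha_eq_val ha hd he
    rw [alpha_conjProj_apply_hunion hA hB hf hcap hd ha hb hx,
      alpha_conjProj_image_hsub hA hB hf hcap hd hr ha hb hx]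

end Conjunction

end HC

theorem abstract_frame_general {L V X Y : Type}
    (πA : Heap L V → Option X) (πB : Heap L V → Option Y)
    (hA : Locality πA) (hB : Locality πB)
    (f : Heap L V → Set (Heap L V)) (hf : LocalAction f)
    (m : X → AbsDom X)
    (hm : Sound πA m f) (hcap : CapturesProg πA f) :
    Sound (conjProj πA πB) (conjProg m (fun b : Y => AbsDom.val b)) f ∧
    CapturesProg (conjProj πA πB) f :=
  ⟨hm.conj_id hA hB hf hcap, CapturesProg.conj hA hB hf hcap⟩

/-- abstract frame rule. -/
theorem abstract_frame {L V X Y : Type} [Countable L] [Infinite L]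
    (πA : Heap L V → Option X) (πB : Heap L V → Option Y)
    (hA : Locality πA) (hB : Locality πB)
    (f : Heap L V → Set (Heap L V)) (hf : LocalAction f)
    (m : X → AbsDom X)
    (hm : Sound πA m f) (hcap : CapturesProg πA f) :
    Sound (conjProj πA πB) (conjProg m (fun b : Y => AbsDom.val b)) f ∧
    CapturesProg (conjProj πA πB) f :=
  abstract_frame_general πA πB hA hB f hf m hm hcap
end

section
/- Compound abstract commutativity: if abstract programs m and n commute under Q in abstraction A, and abstract programs m' and n' commute under Q' in abstraction A', then m * m' and n * n' commute under P in A * A', where P(a, b) ≡ Q(a) ∧ Q'(b). -/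
open HC
lemma mhat_val {X : Type} {k : X → AbsDom X} {c : AbsDom X} {y : X}
    (h : mhat k c = .val y) : ∃ x, c = .val x ∧ k x = .val y := by
  cases c <;> simp [mhat] at h ⊢ <;> exact h

/-- compound abstract commutativity. -/
theorem compound_abs_commute {X Y : Type}
    (m n : X → AbsDom X) (m' n' : Y → AbsDom Y)
    (Q : X → Prop) (Q' : Y → Prop)
    (h1 : AbsCommute m n Q) (h2 : AbsCommute m' n' Q') :
    AbsCommute (conjProg m m') (conjProg n n') (fun p => Q p.1 ∧ Q' p.2) := by
  rintro ⟨a, b⟩ ⟨hQ, hQ'⟩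
  obtain ⟨e1, y, hy⟩ := h1 a hQ
  obtain ⟨e2, y', hy'⟩ := h2 b hQ'
  obtain ⟨a1, hma, hna1⟩ := mhat_val hy
  obtain ⟨a2, hna, hma2⟩ := mhat_val (e1 ▸ hy)
  obtain ⟨b1, hmb, hnb1⟩ := mhat_val hy'
  obtain ⟨b2, hnb, hmb2⟩ := mhat_val (e2 ▸ hy')
  constructor
  · show mhat _ (conjProg m m' (a,b)) = mhat _ (conjProg n n' (a,b))
    simp [conjProg, hma, hmb, hna, hnb, mhat, hna1, hnb1, hma2, hmb2]
  · exact ⟨(y, y'), by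
      show mhat _ (conjProg m m' (a,b)) = _
      simp [conjProg, hma, hmb, mhat, hna1, hnb1]⟩
end
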